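/- Let u be a semi-stable radially decreasing W^{1,p} solution of -Δ_p u = g(u) on the punctured unit ball (in radial coordinates). Then for every continuously differentiable function η : [0,1] → ℝ with η(1) = 0 (not required to vanish near the origin), one has (n-1) ∫_0^1 r^{n-1} |u'(r)|^p η(r)^2 dr ≤ (p-1) ∫_0^1 r^{n-1} |u'(r)|^p (η(r) + r·η'(r))^2 dr. -/

import Mathlib

/-!
Testing semi-stability with `ξ = u' φ`, for `φ` compactly supported in `(0,1)`, gives the
Hardy-type inequality `(n-1) ∫ r^{n-3} |u'|^p φ² ≤ (p-1) ∫ r^{n-1} |u'|^p φ'²`. The reason is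
that the stability integrand minus the Hardy integrand is the exact derivative of
`r^{n-1} g(u) (-u') φ² - (n-1) r^{n-2} (-u')^p φ²`, once `g(u)` is eliminated through the
equation in nondivergence form `r g(u) = (n-1)(-u')^{p-1} - (p-1) r (-u')^{p-2} u''`. This only
needs `u'` to be `C¹`, which follows from `u' < 0` and the flux `r^{n-1}|u'|^{p-2}u'` being `C¹`.

The inequality then extends to `φ = r η` by truncating with cutoffs whose derivatives are
`O(k)` on intervals of length `O(1/k)` at both ends: `r η` vanishes linearly at `0`, and at `1`
because `η 1 = 0`, so the truncations have uniformly bounded derivatives and dominated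
convergence applies.
-/

open MeasureTheory Set Real Filter

/-- The radial `W^{1,p}` norm of a radial function `u` with radial derivative `u'`
on the unit ball of `ℝ^n`, written in radial coordinates. -/
noncomputable def radialNorm (n : ℕ) (p : ℝ) (u u' : ℝ → ℝ) : ℝ :=
  (∫ r in Ioc (0:ℝ) 1, r ^ ((n : ℝ) - 1) * (|u r| ^ p + |u' r| ^ p)) ^ (1 / p)

/-- `u : (0,1] → ℝ` (with radial derivative `u'`) is a radially decreasing `W^{1,p}`
solution of `-Δ_p u = g(u)` on the punctured unit ball, in radial coordinates:
`u` is `C^1` on `(0,1]` with derivative `u'`, `u' < 0` on `(0,1)`,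
`r ↦ r^{n-1}|u'|^{p-2}u'` has derivative `-r^{n-1} g(u(r))` on `(0,1)`, and the radial
`W^{1,p}` norm of `u` is finite. -/
def IsRadialSolution (n : ℕ) (p : ℝ) (g : ℝ → ℝ) (u u' : ℝ → ℝ) : Prop :=
  (∀ r ∈ Ioc (0:ℝ) 1, HasDerivWithinAt u (u' r) (Ioc (0:ℝ) 1) r) ∧
  ContinuousOn u' (Ioc (0:ℝ) 1) ∧
  (∀ r ∈ Ioo (0:ℝ) 1, u' r < 0) ∧
  (∀ r ∈ Ioo (0:ℝ) 1,
    HasDerivAt (fun s : ℝ => s ^ ((n : ℝ) - 1) * |u' s| ^ (p - 2) * u' s)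
      (-(r ^ ((n : ℝ) - 1) * g (u r))) r) ∧
  IntegrableOn (fun r : ℝ => r ^ ((n : ℝ) - 1) * (|u r| ^ p + |u' r| ^ p)) (Ioc (0:ℝ) 1)

/-- Semi-stability of a radial solution: the second variation of energy is nonnegative
for every `C^1` test function with compact support in `(0,1)`. -/
def IsSemiStable (n : ℕ) (p : ℝ) (g : ℝ → ℝ) (u u' : ℝ → ℝ) : Prop :=
  ∀ ξ : ℝ → ℝ, ContDiff ℝ 1 ξ → IsCompact (tsupport ξ) → tsupport ξ ⊆ Ioo (0:ℝ) 1 →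
    0 ≤ ∫ r in Ioc (0:ℝ) 1,
        r ^ ((n : ℝ) - 1) *
          ((p - 1) * |u' r| ^ (p - 2) * (deriv ξ r) ^ 2 - deriv g (u r) * (ξ r) ^ 2)

open Topology Function

theorem ContDiffOn.contDiff_of_tsupport_subset {𝕜 E F : Type*} [NontriviallyNormedField 𝕜]
    [NormedAddCommGroup E] [NormedSpace 𝕜 E] [NormedAddCommGroup F] [NormedSpace 𝕜 F]
    {n : WithTop ℕ∞} {f : E → F} {s : Set E} (hf : ContDiffOn 𝕜 n f s) (hs : IsOpen s)
    (hfs : tsupport f ⊆ s) : ContDiff 𝕜 n f := by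
  refine contDiff_iff_contDiffAt.2 fun x => ?_
  by_cases hx : x ∈ s
  · exact hf.contDiffAt (hs.mem_nhds hx)
  · exact contDiffAt_const.congr_of_eventuallyEq
      (notMem_tsupport_iff_eventuallyEq.1 fun h => hx (hfs h))

section SupportedInCompact

variable {f G : ℝ → ℝ} {K U : Set ℝ}

theorem ContinuousOn.integrable_of_eq_zero_off (hf : ContinuousOn f U) (hU : IsOpen U)
    (hK : IsCompact K) (hKU : K ⊆ U) (hfK : ∀ x ∉ K, f x = 0) : Integrable f :=
  (hf.continuous_of_tsupport_subset hU
      ((closure_minimal (support_subset_iff'.2 hfK) hK.isClosed).trans hKU)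
    ).integrable_of_hasCompactSupport (HasCompactSupport.intro hK hfK)

theorem integral_eq_zero_of_hasDerivAt_of_eq_zero_off (hU : IsOpen U) (hK : IsCompact K)
    (hKU : K ⊆ U) (hG : ∀ x ∈ U, HasDerivAt G (f x) x) (hf : ContinuousOn f U)
    (hGK : ∀ x ∉ K, G x = 0) (hfK : ∀ x ∉ K, f x = 0) : ∫ x, f x = 0 := by
  have hderiv : ∀ x, HasDerivAt G (f x) x := by
    intro x
    by_cases hx : x ∈ U
    · exact hG x hx
    · have hxK : x ∉ K := fun h => hx (hKU h)
      rw [hfK x hxK]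
      exact (hasDerivAt_const x 0).congr_of_eventuallyEq
        (eventually_of_mem (hK.isClosed.isOpen_compl.mem_nhds hxK) hGK)
  have hGc : ContinuousOn G U := fun x hx => (hG x hx).continuousAt.continuousWithinAt
  exact integral_eq_zero_of_hasDerivAt_of_integrable hderiv
    (hf.integrable_of_eq_zero_off hU hK hKU hfK) (hGc.integrable_of_eq_zero_off hU hK hKU hGK)

theorem setIntegral_Ioc_eq_of_hasDerivAt_sub {S M : ℝ → ℝ} (hK : IsCompact K)
    (hK01 : K ⊆ Ioo 0 1) (hS : ContinuousOn S (Ioo 0 1)) (hM : ContinuousOn M (Ioo 0 1))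
    (hG : ∀ x ∈ Ioo 0 1, HasDerivAt G (S x - M x) x) (hSK : ∀ x ∉ K, S x = 0)
    (hMK : ∀ x ∉ K, M x = 0) (hGK : ∀ x ∉ K, G x = 0) :
    ∫ x in Ioc 0 1, S x = ∫ x in Ioc 0 1, M x := by
  have h := integral_eq_zero_of_hasDerivAt_of_eq_zero_off isOpen_Ioo hK hK01 hG (hS.sub hM) hGK
    fun x hx => by rw [hSK x hx, hMK x hx, sub_zero]
  rw [integral_sub (hS.integrable_of_eq_zero_off isOpen_Ioo hK hK01 hSK)
    (hM.integrable_of_eq_zero_off isOpen_Ioo hK hK01 hMK), sub_eq_zero] at h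
  have hIoc {F : ℝ → ℝ} (hF : ∀ x ∉ K, F x = 0) : ∫ x in Ioc 0 1, F x = ∫ x, F x :=
    setIntegral_eq_integral_of_forall_compl_eq_zero fun x hx =>
      hF x fun h => hx (Ioo_subset_Ioc_self (hK01 h))
  rw [hIoc hSK, hIoc hMK, h]

end SupportedInCompact

theorem deriv_smoothTransition_of_notMem_Icc {x : ℝ} (hx : x ∉ Icc 0 1) :
    deriv smoothTransition x = 0 := by
  simp only [mem_Icc, not_and_or, not_le] at hx
  rcases hx with h | h
  · rw [EventuallyEq.deriv_eq (f := fun _ => (0 : ℝ)), deriv_const]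
    filter_upwards [Iio_mem_nhds h] with y hy using smoothTransition.zero_of_nonpos hy.le
  · rw [EventuallyEq.deriv_eq (f := fun _ => (1 : ℝ)), deriv_const]
    filter_upwards [Ioi_mem_nhds h] with y hy using smoothTransition.one_of_one_le hy.le

theorem exists_abs_deriv_smoothTransition_sub_one_mul_le :
    ∃ C, ∀ x, |deriv smoothTransition (x - 1)| * x ≤ C := by
  obtain ⟨C, hC⟩ := ((smoothTransition.contDiff (n := 1)).continuous_deriv
    le_rfl).bounded_above_of_compact_support
      (HasCompactSupport.intro isCompact_Icc fun x hx => deriv_smoothTransition_of_notMem_Icc hx)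
  have hC0 : 0 ≤ C := (norm_nonneg _).trans (hC 0)
  refine ⟨2 * C, fun x => ?_⟩
  by_cases hx : x - 1 ∈ Icc 0 1
  · have h := hC (x - 1)
    rw [norm_eq_abs] at h
    nlinarith [abs_nonneg (deriv smoothTransition (x - 1)), hx.1, hx.2]
  · rw [deriv_smoothTransition_of_notMem_Icc hx, abs_zero, zero_mul]
    positivity

/-- Equal to `1` on `[2/k, 1 - 2/k]` and supported in `[1/k, 1 - 1/k]`. -/
noncomputable def cutoff (k : ℕ) (r : ℝ) : ℝ :=
  smoothTransition (k * r - 1) * smoothTransition (k * (1 - r) - 1)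

theorem contDiff_cutoff (k : ℕ) {m : ℕ∞} : ContDiff ℝ m (cutoff k) := by
  unfold cutoff
  fun_prop

theorem cutoff_nonneg (k : ℕ) (r : ℝ) : 0 ≤ cutoff k r :=
  mul_nonneg (smoothTransition.nonneg _) (smoothTransition.nonneg _)

theorem cutoff_le_one (k : ℕ) (r : ℝ) : cutoff k r ≤ 1 :=
  mul_le_one₀ (smoothTransition.le_one _) (smoothTransition.nonneg _) (smoothTransition.le_one _)

theorem tsupport_cutoff_subset {k : ℕ} (hk : k ≠ 0) : tsupport (cutoff k) ⊆ Ioo 0 1 := by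
  have hk0 : (0 : ℝ) < k := by positivity
  have hsupp : support (cutoff k) ⊆ Icc (1 / k) (1 - 1 / k) := by
    intro r hr
    have h1 : 0 < (k : ℝ) * r - 1 := lt_of_not_ge fun h =>
      hr (by simp [cutoff, smoothTransition.zero_of_nonpos h])
    have h2 : 0 < (k : ℝ) * (1 - r) - 1 := lt_of_not_ge fun h =>
      hr (by simp [cutoff, smoothTransition.zero_of_nonpos h])
    have h3 : 1 / (k : ℝ) ≤ r := (div_le_iff₀ hk0).2 (by linarith)
    have h4 : 1 / (k : ℝ) ≤ 1 - r := (div_le_iff₀ hk0).2 (by linarith)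
    exact ⟨h3, by linarith⟩
  refine (closure_minimal hsupp isClosed_Icc).trans fun r hr => ?_
  have : 0 < 1 / (k : ℝ) := by positivity
  exact ⟨this.trans_le hr.1, hr.2.trans_lt (by linarith)⟩

theorem eventually_cutoff_eventuallyEq_one {r : ℝ} (hr : r ∈ Ioo 0 1) :
    ∀ᶠ k : ℕ in atTop, cutoff k =ᶠ[𝓝 r] 1 := by
  filter_upwards [tendsto_natCast_atTop_atTop.eventually_gt_atTop (2 / r),
    tendsto_natCast_atTop_atTop.eventually_gt_atTop (2 / (1 - r))] with k hk1 hk2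
  have h1 : 1 < (k : ℝ) * r - 1 := by have := (div_lt_iff₀ hr.1).1 hk1; linarith
  have h2 : 1 < (k : ℝ) * (1 - r) - 1 := by
    have := (div_lt_iff₀ (sub_pos.2 hr.2)).1 hk2; linarith
  have hc1 : Continuous fun s : ℝ => (k : ℝ) * s - 1 := by fun_prop
  have hc2 : Continuous fun s : ℝ => (k : ℝ) * (1 - s) - 1 := by fun_prop
  filter_upwards [(hc1.tendsto r).eventually_const_lt h1, (hc2.tendsto r).eventually_const_lt h2]
    with s hs1 hs2
  simp [cutoff, smoothTransition.one_of_one_le hs1.le, smoothTransition.one_of_one_le hs2.le]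

theorem hasDerivAt_cutoff (k : ℕ) (r : ℝ) :
    HasDerivAt (cutoff k)
      (deriv smoothTransition (k * r - 1) * k * smoothTransition (k * (1 - r) - 1)
        - smoothTransition (k * r - 1) * (deriv smoothTransition (k * (1 - r) - 1) * k)) r := by
  have hθ (x : ℝ) : HasDerivAt smoothTransition (deriv smoothTransition x) x :=
    ((smoothTransition.contDiff (n := 1)).differentiable one_ne_zero x).hasDerivAt
  have h1 : HasDerivAt (fun s : ℝ => (k : ℝ) * s - 1) k r := by
    simpa using ((hasDerivAt_id r).const_mul (k : ℝ)).sub_const 1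
  have h2 : HasDerivAt (fun s : ℝ => (k : ℝ) * (1 - s) - 1) (-k) r := by
    simpa using (((hasDerivAt_id r).const_sub 1).const_mul (k : ℝ)).sub_const 1
  refine (((hθ _).comp r h1).fun_mul ((hθ _).comp r h2)).congr_deriv ?_
  simp only [comp_apply]
  ring

theorem exists_abs_deriv_cutoff_mul_min_le :
    ∃ C, ∀ (k : ℕ), ∀ r ∈ Icc (0 : ℝ) 1, |deriv (cutoff k) r| * min r (1 - r) ≤ C := by
  obtain ⟨C, hC⟩ := exists_abs_deriv_smoothTransition_sub_one_mul_le
  refine ⟨2 * C, fun k r hr => ?_⟩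
  rw [(hasDerivAt_cutoff k r).deriv]
  set A := |deriv smoothTransition (k * r - 1)|
  set B := |deriv smoothTransition (k * (1 - r) - 1)|
  set θ₁ := smoothTransition (k * r - 1)
  set θ₂ := smoothTransition (k * (1 - r) - 1)
  have hk : (0 : ℝ) ≤ k := k.cast_nonneg
  have hm : 0 ≤ min r (1 - r) := le_min hr.1 (sub_nonneg.2 hr.2)
  have habs : |deriv smoothTransition (k * r - 1) * k * θ₂
      - θ₁ * (deriv smoothTransition (k * (1 - r) - 1) * k)| ≤ A * k * θ₂ + θ₁ * (B * k) := by
    refine (abs_sub _ _).trans_eq ?_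
    rw [abs_mul, abs_mul, abs_mul, abs_mul, abs_of_nonneg hk,
      abs_of_nonneg (smoothTransition.nonneg _), abs_of_nonneg (smoothTransition.nonneg _)]
  have hA : A * k * θ₂ * min r (1 - r) ≤ A * (k * r) := by
    have := mul_le_mul (smoothTransition.le_one (k * (1 - r) - 1)) (min_le_left r (1 - r)) hm
      zero_le_one
    nlinarith [mul_nonneg (abs_nonneg (deriv smoothTransition (k * r - 1))) hk]
  have hB : θ₁ * (B * k) * min r (1 - r) ≤ B * (k * (1 - r)) := by
    have := mul_le_mul (smoothTransition.le_one (k * r - 1)) (min_le_right r (1 - r)) hm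
      zero_le_one
    nlinarith [mul_nonneg (abs_nonneg (deriv smoothTransition (k * (1 - r) - 1))) hk]
  calc _ ≤ (A * k * θ₂ + θ₁ * (B * k)) * min r (1 - r) := mul_le_mul_of_nonneg_right habs hm
    _ ≤ A * (k * r) + B * (k * (1 - r)) := by linarith
    _ ≤ 2 * C := by linarith [hC (k * r), hC (k * (1 - r))]

theorem abs_deriv_cutoff_mul_le {ψ : ℝ → ℝ} (hψ : Differentiable ℝ ψ) (k : ℕ) {r C L : ℝ}
    (hL : 0 ≤ L) (hC : |deriv (cutoff k) r| * min r (1 - r) ≤ C)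
    (hψr : |ψ r| ≤ L * min r (1 - r)) (hψ'r : |deriv ψ r| ≤ L) :
    |deriv (fun s => cutoff k s * ψ s) r| ≤ L * C + L := by
  rw [(((contDiff_cutoff k (m := 1)).differentiable one_ne_zero r).hasDerivAt.fun_mul
    (hψ r).hasDerivAt).deriv]
  calc |deriv (cutoff k) r * ψ r + cutoff k r * deriv ψ r|
      ≤ |deriv (cutoff k) r| * |ψ r| + |deriv ψ r| := by
        refine (abs_add_le _ _).trans (add_le_add (abs_mul _ _).le ?_)
        rw [abs_mul, abs_of_nonneg (cutoff_nonneg k r)]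
        exact mul_le_of_le_one_left (abs_nonneg _) (cutoff_le_one k r)
    _ ≤ |deriv (cutoff k) r| * (L * min r (1 - r)) + L :=
        add_le_add (mul_le_mul_of_nonneg_left hψr (abs_nonneg _)) hψ'r
    _ = L * (|deriv (cutoff k) r| * min r (1 - r)) + L := by ring
    _ ≤ L * C + L := by gcongr

theorem tendsto_setIntegral_mul_sq_of_eventually_eq {w f : ℝ → ℝ} {F : ℕ → ℝ → ℝ} {B : ℝ}
    (hw : IntegrableOn w (Ioc 0 1))
    (hF : ∀ k, AEStronglyMeasurable (F k) (volume.restrict (Ioc 0 1)))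
    (hB : ∀ k, ∀ r ∈ Ioc (0 : ℝ) 1, |F k r| ≤ B)
    (hlim : ∀ r ∈ Ioo (0 : ℝ) 1, ∀ᶠ k in atTop, F k r = f r) :
    Tendsto (fun k => ∫ r in Ioc 0 1, w r * F k r ^ 2) atTop
      (𝓝 (∫ r in Ioc 0 1, w r * f r ^ 2)) := by
  refine tendsto_integral_of_dominated_convergence (fun r => B ^ 2 * ‖w r‖)
    (fun k => hw.aestronglyMeasurable.mul ((hF k).pow 2)) (hw.norm.const_mul _)
    (fun k => ae_restrict_of_forall_mem measurableSet_Ioc fun r hr => ?_)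
    ((ae_restrict_congr_set Ioo_ae_eq_Ioc).1
      (ae_restrict_of_forall_mem measurableSet_Ioo fun r hr =>
        tendsto_const_nhds.congr' ((hlim r hr).mono fun k hk => by simp only [hk])))
  rw [norm_mul, norm_pow, norm_eq_abs (F k r), mul_comm]
  exact mul_le_mul_of_nonneg_right
    (pow_le_pow_left₀ (abs_nonneg _) (hB k r hr) 2) (norm_nonneg _)

theorem exists_abs_le_mul_min_of_eq_zero {ψ : ℝ → ℝ} (hψ : ContDiff ℝ 1 ψ) (h0 : ψ 0 = 0)
    (h1 : ψ 1 = 0) :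
    ∃ L, 0 ≤ L ∧ (∀ r ∈ Icc (0 : ℝ) 1, |deriv ψ r| ≤ L) ∧
      ∀ r ∈ Icc (0 : ℝ) 1, |ψ r| ≤ L * min r (1 - r) := by
  obtain ⟨L, hL⟩ := isCompact_Icc.exists_bound_of_continuousOn
    (hψ.continuous_deriv le_rfl).continuousOn (s := Icc (0 : ℝ) 1)
  have hmvt {x y : ℝ} (hx : x ∈ Icc (0 : ℝ) 1) (hy : y ∈ Icc (0 : ℝ) 1) :
      |ψ y - ψ x| ≤ L * |y - x| :=
    (convex_Icc 0 1).norm_image_sub_le_of_norm_deriv_le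
      (fun z _ => hψ.differentiable one_ne_zero z) hL hx hy
  have hL0 : 0 ≤ L := (norm_nonneg _).trans (hL 0 (left_mem_Icc.2 zero_le_one))
  refine ⟨L, hL0, hL, fun r hr => ?_⟩
  have hr0 := hmvt (left_mem_Icc.2 zero_le_one) hr
  have hr1 := hmvt hr (right_mem_Icc.2 zero_le_one)
  rw [h0, sub_zero, sub_zero, abs_of_nonneg hr.1] at hr0
  rw [h1, zero_sub, abs_neg, abs_of_nonneg (sub_nonneg.2 hr.2)] at hr1
  rw [mul_min_of_nonneg _ _ hL0]
  exact le_min hr0 hr1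

def HardyIneq (w : ℝ → ℝ) (a b : ℝ) (φ : ℝ → ℝ) : Prop :=
  a * ∫ r in Ioc 0 1, w r * (φ r / r) ^ 2 ≤ b * ∫ r in Ioc 0 1, w r * deriv φ r ^ 2

theorem hardyIneq_of_forall_tsupport_subset {w : ℝ → ℝ} {a b : ℝ}
    (hw : IntegrableOn w (Ioc 0 1))
    (h : ∀ φ, ContDiff ℝ 1 φ → tsupport φ ⊆ Ioo 0 1 → HardyIneq w a b φ) {ψ : ℝ → ℝ}
    (hψ : ContDiff ℝ 1 ψ) (h0 : ψ 0 = 0) (h1 : ψ 1 = 0) : HardyIneq w a b ψ := by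
  obtain ⟨C, hC⟩ := exists_abs_deriv_cutoff_mul_min_le
  obtain ⟨L, hL0, hψ'L, hψL⟩ := exists_abs_le_mul_min_of_eq_zero hψ h0 h1
  set φ : ℕ → ℝ → ℝ := fun k r => cutoff k r * ψ r
  have hφ (k : ℕ) : ContDiff ℝ 1 (φ k) := (contDiff_cutoff k).mul hψ
  have hlim {r : ℝ} (hr : r ∈ Ioo (0 : ℝ) 1) : ∀ᶠ k in atTop, φ k =ᶠ[𝓝 r] ψ := by
    filter_upwards [eventually_cutoff_eventuallyEq_one hr] with k hk
    filter_upwards [hk] with s hs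
    simp [φ, hs]
  have hY := tendsto_setIntegral_mul_sq_of_eventually_eq (F := fun k r => φ k r / r)
    (f := fun r => ψ r / r) (B := L) hw
    (fun k => ((hφ k).continuous.measurable.div measurable_id).aestronglyMeasurable)
    (fun k r hr => by
      rw [abs_div, abs_of_pos hr.1, div_le_iff₀ hr.1, abs_mul, abs_of_nonneg (cutoff_nonneg k r)]
      calc cutoff k r * |ψ r| ≤ 1 * (L * min r (1 - r)) :=
            mul_le_mul (cutoff_le_one k r) (hψL r (Ioc_subset_Icc_self hr)) (abs_nonneg _)
              zero_le_one
        _ ≤ L * r := by rw [one_mul]; exact mul_le_mul_of_nonneg_left (min_le_left _ _) hL0)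
    (fun r hr => (hlim hr).mono fun k hk => by simp only [hk.eq_of_nhds])
  have hX := tendsto_setIntegral_mul_sq_of_eventually_eq (F := fun k => deriv (φ k))
    (f := deriv ψ) (B := L * C + L) hw
    (fun k => ((hφ k).continuous_deriv le_rfl).aestronglyMeasurable)
    (fun k r hr => abs_deriv_cutoff_mul_le (hψ.differentiable one_ne_zero) k hL0
      (hC k r (Ioc_subset_Icc_self hr)) (hψL r (Ioc_subset_Icc_self hr))
      (hψ'L r (Ioc_subset_Icc_self hr)))
    (fun r hr => (hlim hr).mono fun k hk => hk.deriv_eq)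
  exact le_of_tendsto_of_tendsto (hY.const_mul a) (hX.const_mul b)
    (eventually_atTop.2 ⟨1, fun k hk =>
      h (φ k) (hφ k) (tsupport_mul_subset_left.trans (tsupport_cutoff_subset (by omega)))⟩)

theorem abs_rpow_sub_two_mul_of_neg {x : ℝ} (hx : x < 0) (p : ℝ) :
    |x| ^ (p - 2) * x = -(-x) ^ (p - 1) := by
  rw [abs_of_neg hx, show p - 1 = (p - 2) + 1 by ring, rpow_add_one (neg_ne_zero.2 hx.ne)]
  ring

namespace IsRadialSolution

variable {n : ℕ} {p : ℝ} {g u u' : ℝ → ℝ}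

theorem deriv_neg (hsol : IsRadialSolution n p g u u') {r : ℝ} (hr : r ∈ Ioo 0 1) : u' r < 0 :=
  hsol.2.2.1 r hr

theorem hasDerivAt_flux (hsol : IsRadialSolution n p g u u') {r : ℝ} (hr : r ∈ Ioo 0 1) :
    HasDerivAt (fun s => s ^ ((n : ℝ) - 1) * (-u' s) ^ (p - 1))
      (r ^ ((n : ℝ) - 1) * g (u r)) r := by
  have h := (hsol.2.2.2.1 r hr).neg
  rw [neg_neg] at h
  refine h.congr_of_eventuallyEq ?_
  filter_upwards [isOpen_Ioo.mem_nhds hr] with s hs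
  simp only [Pi.neg_apply]
  rw [mul_assoc, abs_rpow_sub_two_mul_of_neg (hsol.deriv_neg hs)]
  ring

theorem continuousOn (hsol : IsRadialSolution n p g u u') : ContinuousOn u (Ioc 0 1) :=
  fun r hr => (hsol.1 r hr).continuousWithinAt

theorem contDiffOn_deriv (hsol : IsRadialSolution n p g u u') (hp : 1 < p) (hg : Continuous g) :
    ContDiffOn ℝ 1 u' (Ioo 0 1) := by
  have hflux : ContDiffOn ℝ 1 (fun s => s ^ ((n : ℝ) - 1) * (-u' s) ^ (p - 1)) (Ioo 0 1) := by
    rw [show (1 : WithTop ℕ∞) = 0 + 1 from rfl, contDiffOn_succ_iff_deriv_of_isOpen isOpen_Ioo]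
    refine ⟨fun r hr => (hsol.hasDerivAt_flux hr).differentiableAt.differentiableWithinAt,
      by simp, ?_⟩
    rw [contDiffOn_zero]
    refine ContinuousOn.congr ?_ fun r hr => (hsol.hasDerivAt_flux hr).deriv
    exact (continuousOn_id.rpow_const fun _ hr => Or.inl hr.1.ne').mul
      (hg.comp_continuousOn (hsol.continuousOn.mono Ioo_subset_Ioc_self))
  have hpos : ∀ s ∈ Ioo (0 : ℝ) 1, 0 < -u' s := fun s hs => neg_pos.2 (hsol.deriv_neg hs)
  have hinv : ∀ s ∈ Ioo (0 : ℝ) 1,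
      s ^ (1 - (n : ℝ)) * (s ^ ((n : ℝ) - 1) * (-u' s) ^ (p - 1)) = (-u' s) ^ (p - 1) := by
    intro s hs
    rw [← mul_assoc, ← rpow_add hs.1]
    simp
  have h : ContDiffOn ℝ 1 (fun s => -(s ^ (1 - (n : ℝ)) *
      (s ^ ((n : ℝ) - 1) * (-u' s) ^ (p - 1))) ^ (p - 1)⁻¹) (Ioo 0 1) :=
    (((contDiffOn_id.rpow_const_of_ne fun s hs => hs.1.ne').mul hflux).rpow_const_of_ne
      fun s hs => by rw [id, hinv s hs]; exact (rpow_pos_of_pos (hpos s hs) _).ne').neg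
  refine h.congr fun s hs => ?_
  rw [hinv s hs, rpow_rpow_inv (hpos s hs).le (by linarith), neg_neg]

theorem hasDerivAt_deriv (hsol : IsRadialSolution n p g u u') (hp : 1 < p) (hg : Continuous g)
    {r : ℝ} (hr : r ∈ Ioo 0 1) : HasDerivAt u' (deriv u' r) r :=
  (((hsol.contDiffOn_deriv hp hg).differentiableOn one_ne_zero r hr).differentiableAt
    (isOpen_Ioo.mem_nhds hr)).hasDerivAt

theorem nondivergence_form (hsol : IsRadialSolution n p g u u') (hp : 1 < p) (hg : Continuous g)
    {r : ℝ} (hr : r ∈ Ioo 0 1) :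
    r * g (u r) = ((n : ℝ) - 1) * (-u' r) ^ (p - 1)
      - (p - 1) * r * (-u' r) ^ (p - 2) * deriv u' r := by
  have h := (hasDerivAt_rpow_const (p := (n : ℝ) - 1) (Or.inl hr.1.ne')).mul
    ((hsol.hasDerivAt_deriv hp hg hr).neg.rpow_const (p := p - 1)
      (Or.inl (neg_pos.2 (hsol.deriv_neg hr)).ne'))
  have hflux := (hsol.hasDerivAt_flux hr).unique h
  rw [show (n : ℝ) - 1 - 1 = (n : ℝ) - 2 by ring, show p - 1 - 1 = p - 2 by ring,
    Pi.neg_apply, show (n : ℝ) - 1 = (n : ℝ) - 2 + 1 by ring, rpow_add_one hr.1.ne'] at hflux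
  refine mul_left_cancel₀ (rpow_pos_of_pos hr.1 ((n : ℝ) - 2)).ne' ?_
  rw [show (n : ℝ) - 2 + 1 = (n : ℝ) - 1 by ring] at hflux
  linear_combination hflux

theorem hasDerivAt_stability_defect (hsol : IsRadialSolution n p g u u') (hp : 1 < p)
    (hg : ContDiff ℝ 1 g) {φ : ℝ → ℝ} (hφ : Differentiable ℝ φ) {r : ℝ} (hr : r ∈ Ioo 0 1) :
    HasDerivAt (fun s => s ^ ((n : ℝ) - 1) * g (u s) * (-u' s) * φ s ^ 2
        - ((n : ℝ) - 1) * (s ^ ((n : ℝ) - 2) * (-u' s) ^ p * φ s ^ 2))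
      (r ^ ((n : ℝ) - 1) * ((p - 1) * |u' r| ^ (p - 2) * deriv (fun s => u' s * φ s) r ^ 2
          - deriv g (u r) * (u' r * φ r) ^ 2)
        - ((p - 1) * (r ^ ((n : ℝ) - 1) * |u' r| ^ p * deriv φ r ^ 2)
          - ((n : ℝ) - 1) * (r ^ ((n : ℝ) - 1) * |u' r| ^ p * (φ r / r) ^ 2))) r := by
  have hr0 := hr.1.ne'
  have hv : 0 < -u' r := neg_pos.2 (hsol.deriv_neg hr)
  have hD := hsol.hasDerivAt_deriv hp hg.continuous hr
  have hφd := (hφ r).hasDerivAt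
  have hgu : HasDerivAt (fun s => g (u s)) (deriv g (u r) * u' r) r :=
    (hg.differentiable one_ne_zero (u r)).hasDerivAt.comp r
      ((hsol.1 r ⟨hr.1, hr.2.le⟩).hasDerivAt (Ioc_mem_nhds hr.1 hr.2))
  have hG := ((((hasDerivAt_rpow_const (p := (n : ℝ) - 1) (Or.inl hr0)).fun_mul hgu).fun_mul
      hD.fun_neg).fun_mul (hφd.fun_pow 2)).fun_sub
    ((((hasDerivAt_rpow_const (p := (n : ℝ) - 2) (Or.inl hr0)).fun_mul
      (hD.fun_neg.rpow_const (p := p) (Or.inl hv.ne'))).fun_mul (hφd.fun_pow 2)).const_mul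
      ((n : ℝ) - 1))
  refine hG.congr_deriv ?_
  have key := hsol.nondivergence_form hp hg.continuous hr
  have hr1 : r ^ ((n : ℝ) - 1) = r ^ ((n : ℝ) - 3) * r * r := by
    rw [show (n : ℝ) - 1 = (n : ℝ) - 3 + 1 + 1 by ring, rpow_add_one hr0, rpow_add_one hr0]
  have hr2 : r ^ ((n : ℝ) - 2) = r ^ ((n : ℝ) - 3) * r := by
    rw [show (n : ℝ) - 2 = (n : ℝ) - 3 + 1 by ring, rpow_add_one hr0]
  have hv1 : (-u' r) ^ (p - 1) = (-u' r) ^ (p - 2) * -u' r := by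
    rw [show p - 1 = p - 2 + 1 by ring, rpow_add_one hv.ne']
  have hvp : (-u' r) ^ p = (-u' r) ^ (p - 2) * -u' r * -u' r := by
    rw [← hv1, ← rpow_add_one hv.ne', sub_add_cancel]
  have hφr : r ^ ((n : ℝ) - 3) * r * r * (φ r / r) ^ 2 = r ^ ((n : ℝ) - 3) * φ r ^ 2 := by
    field_simp
  rw [hv1] at key
  rw [(hD.fun_mul hφd).deriv, abs_of_neg (hsol.deriv_neg hr),
    show (n : ℝ) - 1 - 1 = (n : ℝ) - 2 by ring, show (n : ℝ) - 2 - 1 = (n : ℝ) - 3 by ring,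
    hr1, hr2, hvp, hv1, mul_right_comm _ _ ((φ r / r) ^ 2), hφr]
  linear_combination r ^ ((n : ℝ) - 3) * (((n : ℝ) - 1) * (-u' r) * φ r ^ 2
    - r * deriv u' r * φ r ^ 2 + 2 * r * (-u' r) * φ r * deriv φ r) * key

theorem continuousOn_abs_deriv_rpow (hsol : IsRadialSolution n p g u u') (hp : 1 < p)
    (hg : Continuous g) (c : ℝ) : ContinuousOn (fun r => |u' r| ^ c) (Ioo 0 1) :=
  (hsol.contDiffOn_deriv hp hg).continuousOn.abs.rpow_const fun _ hr =>
    Or.inl (abs_ne_zero.2 (hsol.deriv_neg hr).ne)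

theorem continuousOn_weight_mul (hsol : IsRadialSolution n p g u u') (hp : 1 < p)
    (hg : Continuous g) {F : ℝ → ℝ} (hF : ContinuousOn F (Ioo 0 1)) :
    ContinuousOn (fun r => r ^ ((n : ℝ) - 1) * |u' r| ^ p * F r) (Ioo 0 1) :=
  ((continuousOn_id.rpow_const fun _ hr => Or.inl hr.1.ne').mul
    (hsol.continuousOn_abs_deriv_rpow hp hg p)).mul hF

theorem continuousOn_stability_integrand (hsol : IsRadialSolution n p g u u') (hp : 1 < p)
    (hg : ContDiff ℝ 1 g) {ξ : ℝ → ℝ} (hξ : ContDiff ℝ 1 ξ) :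
    ContinuousOn (fun r => r ^ ((n : ℝ) - 1) *
      ((p - 1) * |u' r| ^ (p - 2) * deriv ξ r ^ 2 - deriv g (u r) * ξ r ^ 2)) (Ioo 0 1) :=
  (continuousOn_id.rpow_const fun _ hr => Or.inl hr.1.ne').mul
    (((continuousOn_const.mul (hsol.continuousOn_abs_deriv_rpow hp hg.continuous _)).mul
      ((hξ.continuous_deriv le_rfl).continuousOn.pow 2)).sub
      (((hg.continuous_deriv le_rfl).comp_continuousOn
        (hsol.continuousOn.mono Ioo_subset_Ioc_self)).mul (hξ.continuous.continuousOn.pow 2)))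

theorem contDiff_deriv_mul (hsol : IsRadialSolution n p g u u') (hp : 1 < p) (hg : Continuous g)
    {φ : ℝ → ℝ} (hφ : ContDiff ℝ 1 φ) (hsupp : tsupport φ ⊆ Ioo 0 1) :
    ContDiff ℝ 1 (fun s => u' s * φ s) :=
  ((hsol.contDiffOn_deriv hp hg).mul hφ.contDiffOn).contDiff_of_tsupport_subset isOpen_Ioo
    (tsupport_mul_subset_right.trans hsupp)

theorem hardy_of_isSemiStable (hsol : IsRadialSolution n p g u u')
    (hstab : IsSemiStable n p g u u') (hp : 1 < p) (hg : ContDiff ℝ 1 g) {φ : ℝ → ℝ}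
    (hφ : ContDiff ℝ 1 φ) (hsupp : tsupport φ ⊆ Ioo 0 1) :
    HardyIneq (fun r => r ^ ((n : ℝ) - 1) * |u' r| ^ p) ((n : ℝ) - 1) (p - 1) φ := by
  set K := tsupport φ
  have hK : IsCompact K :=
    isCompact_Icc.of_isClosed_subset (isClosed_tsupport φ) (hsupp.trans Ioo_subset_Icc_self)
  have hφ0 : ∀ r ∉ K, φ r = 0 := fun r hr => image_eq_zero_of_notMem_tsupport hr
  have hdφ0 : ∀ r ∉ K, deriv φ r = 0 := fun r hr => deriv_of_notMem_tsupport hr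
  set ξ := fun s => u' s * φ s
  have hξ : ContDiff ℝ 1 ξ := hsol.contDiff_deriv_mul hp hg.continuous hφ hsupp
  have hξK : tsupport ξ ⊆ K := tsupport_mul_subset_right
  have hdξ0 : ∀ r ∉ K, deriv ξ r = 0 := fun r hr => deriv_of_notMem_tsupport fun h => hr (hξK h)
  set S := fun r : ℝ => r ^ ((n : ℝ) - 1) *
    ((p - 1) * |u' r| ^ (p - 2) * deriv ξ r ^ 2 - deriv g (u r) * ξ r ^ 2)
  set X := fun r : ℝ => r ^ ((n : ℝ) - 1) * |u' r| ^ p * deriv φ r ^ 2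
  set Y := fun r : ℝ => r ^ ((n : ℝ) - 1) * |u' r| ^ p * (φ r / r) ^ 2
  have hX : ContinuousOn X (Ioo 0 1) :=
    hsol.continuousOn_weight_mul hp hg.continuous ((hφ.continuous_deriv le_rfl).continuousOn.pow 2)
  have hY : ContinuousOn Y (Ioo 0 1) := hsol.continuousOn_weight_mul hp hg.continuous
    ((hφ.continuous.continuousOn.div continuousOn_id fun r hr => hr.1.ne').pow 2)
  have hX0 : ∀ r ∉ K, X r = 0 := fun r hr => by simp [X, hdφ0 r hr]
  have hY0 : ∀ r ∉ K, Y r = 0 := fun r hr => by simp [Y, hφ0 r hr]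
  have hXi : IntegrableOn X (Ioc 0 1) :=
    (hX.integrable_of_eq_zero_off isOpen_Ioo hK hsupp hX0).integrableOn
  have hYi : IntegrableOn Y (Ioc 0 1) :=
    (hY.integrable_of_eq_zero_off isOpen_Ioo hK hsupp hY0).integrableOn
  have hstab' : 0 ≤ ∫ r in Ioc 0 1, S r :=
    hstab ξ hξ (hK.of_isClosed_subset (isClosed_tsupport _) hξK) (hξK.trans hsupp)
  rw [setIntegral_Ioc_eq_of_hasDerivAt_sub (M := fun r => (p - 1) * X r - ((n : ℝ) - 1) * Y r)
      hK hsupp (hsol.continuousOn_stability_integrand hp hg hξ)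
      ((continuousOn_const.mul hX).sub (continuousOn_const.mul hY))
      (fun r hr => hsol.hasDerivAt_stability_defect hp hg (hφ.differentiable one_ne_zero) hr)
      (fun r hr => by simp [ξ, hφ0 r hr, hdξ0 r hr])
      (fun r hr => by simp [hX0 r hr, hY0 r hr]) (fun r hr => by simp [hφ0 r hr]),
    integral_sub (hXi.const_mul _) (hYi.const_mul _), integral_const_mul, integral_const_mul]
    at hstab'
  rw [HardyIneq]
  linarith

theorem integrableOn_weight (hsol : IsRadialSolution n p g u u') :
    IntegrableOn (fun r => r ^ ((n : ℝ) - 1) * |u' r| ^ p) (Ioc 0 1) := by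
  refine hsol.2.2.2.2.mono' (((measurable_id.pow_const _).aemeasurable.mul
    ((hsol.2.1.aestronglyMeasurable measurableSet_Ioc).aemeasurable.abs.pow_const p)
    ).aestronglyMeasurable) (ae_restrict_of_forall_mem measurableSet_Ioc fun r hr => ?_)
  have h1 := rpow_nonneg hr.1.le ((n : ℝ) - 1)
  have h2 := rpow_nonneg (abs_nonneg (u r)) p
  have h3 := rpow_nonneg (abs_nonneg (u' r)) p
  rw [norm_of_nonneg (mul_nonneg h1 h3)]
  nlinarith

end IsRadialSolution

theorem stmt8_general (n : ℕ) (p : ℝ) (hp : 1 < p)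
    (g u u' : ℝ → ℝ) (hg : ContDiff ℝ 1 g)
    (hsol : IsRadialSolution n p g u u') (hstab : IsSemiStable n p g u u')
    (η : ℝ → ℝ) (hη : ContDiff ℝ 1 η) (hη1 : η 1 = 0) :
    ((n : ℝ) - 1) * ∫ r in Ioc (0:ℝ) 1, r ^ ((n : ℝ) - 1) * |u' r| ^ p * (η r) ^ 2
      ≤ (p - 1) * ∫ r in Ioc (0:ℝ) 1,
          r ^ ((n : ℝ) - 1) * |u' r| ^ p * (η r + r * deriv η r) ^ 2 := by
  have h := hardyIneq_of_forall_tsupport_subset (ψ := fun r => r * η r)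
    hsol.integrableOn_weight (fun φ hφ hsupp => hsol.hardy_of_isSemiStable hstab hp hg hφ hsupp)
    (contDiff_id.mul hη) (by simp) (by simp [hη1])
  have hquot : ∀ r ∈ Ioc (0 : ℝ) 1, r * η r / r = η r :=
    fun r hr => mul_div_cancel_left₀ _ hr.1.ne'
  have hderiv : ∀ r, deriv (fun r => r * η r) r = η r + r * deriv η r := fun r => by
    simpa using ((hasDerivAt_id' r).fun_mul (hη.differentiable one_ne_zero r).hasDerivAt).deriv
  rwa [HardyIneq, setIntegral_congr_fun measurableSet_Ioc fun r hr => by rw [hquot r hr],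
    funext hderiv] at h

theorem stmt8 (n : ℕ) (hn : 1 ≤ n) (p : ℝ) (hp : 1 < p)
    (g u u' : ℝ → ℝ) (hg : ContDiff ℝ 1 g)
    (hsol : IsRadialSolution n p g u u') (hstab : IsSemiStable n p g u u')
    (η : ℝ → ℝ) (hη : ContDiff ℝ 1 η) (hη1 : η 1 = 0) :
    ((n : ℝ) - 1) * ∫ r in Ioc (0:ℝ) 1, r ^ ((n : ℝ) - 1) * |u' r| ^ p * (η r) ^ 2
      ≤ (p - 1) * ∫ r in Ioc (0:ℝ) 1,
          r ^ ((n : ℝ) - 1) * |u' r| ^ p * (η r + r * deriv η r) ^ 2 :=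
  stmt8_general n p hp g u u' hg hsol hstab η hη hη1
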